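/- For n > 2h+1 and k ≥ 1, the identity p(n-2h-1, k-1) + h * p(n-3h-2, k-2) = q(n-h-1, k-1) holds, where p(m, r) counts independent r-subsets of the h-th power of a path on m vertices and q(m, r) counts independent r-subsets of the h-th power of a cycle on m vertices (with the convention p(m,r) = 0 for r ≥ 1 and m < 0, and p(m,0) = 1). -/

import Mathlib

/-!
An independent set of the cycle power `C_m^(h)` either lies in `{1, ..., m - h}`, where the
cycle condition reduces to the path condition, or has its maximum `m - t` with `t < h`. In the
second case the cycle condition confines the other elements to the window `(h - t, m - t - h)`,
and shifting them down by `h - t` gives an independent set of `P_{m-2h-1}^(h)` with one element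
fewer. With `m = n - h - 1` this is the identity.
-/

/-- Independent subsets of the h-th power of the path on n vertices:
subsets of {1,...,n} with all pairwise differences of distinct elements greater than h. -/
def pathSubsets (n h : ℕ) : Finset (Finset ℕ) :=
  (Finset.Icc 1 n).powerset.filter (fun S => ∀ i ∈ S, ∀ j ∈ S, i < j → i + h < j)

def pathCount (n h k : ℕ) : ℕ := ((pathSubsets n h).filter (fun S => S.card = k)).card

def pathTotal (n h : ℕ) : ℕ := (pathSubsets n h).card

/-- Independent subsets of the h-th power of the cycle on n vertices:
subsets S of {1,...,n} with h < |i-j| < n-h for all distinct i,j ∈ S. -/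
def cycleSubsets (n h : ℕ) : Finset (Finset ℕ) :=
  (Finset.Icc 1 n).powerset.filter
    (fun S => ∀ i ∈ S, ∀ j ∈ S, i < j → i + h < j ∧ j + h < n + i)

def cycleCount (n h k : ℕ) : ℕ := ((cycleSubsets n h).filter (fun S => S.card = k)).card

def cycleTotal (n h : ℕ) : ℕ := (cycleSubsets n h).card

/-- Number of edges of the Hasse diagram of independent subsets of Pₙ⁽ʰ⁾ ordered by inclusion. -/
def pathEdges (n h : ℕ) : ℕ :=
  (((pathSubsets n h) ×ˢ (pathSubsets n h)).filter
    (fun p => p.1 ⊆ p.2 ∧ p.2.card = p.1.card + 1)).card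

/-- Number of edges of the Hasse diagram of independent subsets of Cₙ⁽ʰ⁾ ordered by inclusion. -/
def cycleEdges (n h : ℕ) : ℕ :=
  (((cycleSubsets n h) ×ˢ (cycleSubsets n h)).filter
    (fun p => p.1 ⊆ p.2 ∧ p.2.card = p.1.card + 1)).card

/-- `p(m, r)` for integer `m` and `r`: the number of `r`-subsets of `{1,...,max(m,0)}`
with all pairwise differences greater than `h`; zero when `r < 0`. -/
def pcountZ (h : ℕ) (m r : ℤ) : ℕ :=
  ((pathSubsets m.toNat h).filter (fun S => (S.card : ℤ) = r)).card

open Finset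

section

variable {m h t : ℕ} {S T : Finset ℕ}

lemma mem_pathSubsets : S ∈ pathSubsets m h ↔
    (∀ x ∈ S, 1 ≤ x ∧ x ≤ m) ∧ ∀ i ∈ S, ∀ j ∈ S, i < j → i + h < j := by
  simp [pathSubsets, subset_iff]

lemma mem_cycleSubsets : S ∈ cycleSubsets m h ↔
    (∀ x ∈ S, 1 ≤ x ∧ x ≤ m) ∧ ∀ i ∈ S, ∀ j ∈ S, i < j → i + h < j ∧ j + h < m + i := by
  simp [cycleSubsets, subset_iff]

lemma filter_cycleSubsets_forall_le (m h : ℕ) :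
    (cycleSubsets m h).filter (fun S => ∀ x ∈ S, x ≤ m - h) = pathSubsets (m - h) h := by
  ext S
  simp only [mem_filter, mem_cycleSubsets, mem_pathSubsets]
  constructor
  · rintro ⟨⟨hrange, hsep⟩, hle⟩
    exact ⟨fun x hx => ⟨(hrange x hx).1, hle x hx⟩, fun i hi j hj hij => (hsep i hi j hj hij).1⟩
  · rintro ⟨hrange, hsep⟩
    refine ⟨⟨fun x hx => ?_, fun i hi j hj hij => ⟨hsep i hi j hj hij, ?_⟩⟩,
      fun x hx => (hrange x hx).2⟩
    · have := hrange x hx; omega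
    · have := hrange i hi; have := hrange j hj; omega

def cycleOfPath (m h t : ℕ) (T : Finset ℕ) : Finset ℕ :=
  insert (m - t) (T.image (· + (h - t)))

def pathOfCycle (m h : ℕ) (S : Finset ℕ) : ℕ × Finset ℕ :=
  (m - S.sup id, (S.erase (S.sup id)).image (· - (S.sup id + h - m)))

lemma cycleOfPath_mem_cycleSubsets (hm : h ≤ m) (ht : t < h)
    (hT : T ∈ pathSubsets (m - 2 * h - 1) h) : cycleOfPath m h t T ∈ cycleSubsets m h := by
  rw [mem_pathSubsets] at hT
  obtain ⟨hrange, hsep⟩ := hT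
  simp only [cycleOfPath, mem_cycleSubsets, forall_mem_insert, forall_mem_image]
  refine ⟨⟨by omega, fun x hx => ?_⟩, ⟨by omega, fun x hx _ => ?_⟩, fun x hx =>
    ⟨fun _ => ?_, fun y hy hxy => ?_⟩⟩
  · have := hrange x hx; omega
  · have := hrange x hx; omega
  · have := hrange x hx; omega
  · have := hrange x hx; have := hrange y hy; have := hsep x hx y hy (by omega); omega

lemma sup_cycleOfPath (ht : t < h) (hT : T ∈ pathSubsets (m - 2 * h - 1) h) :
    (cycleOfPath m h t T).sup id = m - t := by
  refine le_antisymm (Finset.sup_le ?_) (le_sup (f := id) (mem_insert_self _ _))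
  simp only [cycleOfPath, forall_mem_insert, forall_mem_image, id]
  exact ⟨le_rfl, fun x hx => by have := (mem_pathSubsets.1 hT).1 x hx; omega⟩

lemma sub_notMem_image_add_sub (ht : t < h) (hT : T ∈ pathSubsets (m - 2 * h - 1) h) :
    m - t ∉ T.image (· + (h - t)) := by
  simp only [mem_image, not_exists, not_and]
  intro x hx
  have := (mem_pathSubsets.1 hT).1 x hx
  omega

lemma card_cycleOfPath (ht : t < h) (hT : T ∈ pathSubsets (m - 2 * h - 1) h) :
    (cycleOfPath m h t T).card = T.card + 1 := by
  rw [cycleOfPath, card_insert_of_notMem (sub_notMem_image_add_sub ht hT),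
    card_image_of_injective _ (add_left_injective _)]

lemma pathOfCycle_cycleOfPath (hm : h ≤ m) (ht : t < h)
    (hT : T ∈ pathSubsets (m - 2 * h - 1) h) :
    pathOfCycle m h (cycleOfPath m h t T) = (t, T) := by
  rw [pathOfCycle, sup_cycleOfPath ht hT, cycleOfPath, erase_insert (sub_notMem_image_add_sub ht hT),
    image_image, Prod.mk.injEq]
  refine ⟨by omega, ?_⟩
  conv_rhs => rw [← image_id (s := T)]
  refine image_congr fun x _ => ?_
  simp only [Function.comp, id]
  omega

lemma sup_mem_window_of_mem_cycleSubsets (hS : S ∈ cycleSubsets m h)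
    (hbig : ¬ ∀ x ∈ S, x ≤ m - h) :
    S.sup id ∈ S ∧ m - h < S.sup id ∧ S.sup id ≤ m ∧
      ∀ j ∈ S.erase (S.sup id), j + h < S.sup id ∧ S.sup id + h < m + j := by
  rw [mem_cycleSubsets] at hS
  push Not at hbig
  obtain ⟨x, hx, hxbig⟩ := hbig
  have hsup : S.sup id ∈ S := by
    obtain ⟨i, hi, hieq⟩ := exists_mem_eq_sup S ⟨x, hx⟩ id
    exact hieq ▸ hi
  have hle : ∀ j ∈ S, j ≤ S.sup id := fun j hj => le_sup (f := id) hj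
  refine ⟨hsup, (hxbig.trans_le (hle x hx)), (hS.1 _ hsup).2, fun j hj => ?_⟩
  obtain ⟨hjne, hj⟩ := mem_erase.1 hj
  exact hS.2 j hj _ hsup (lt_of_le_of_ne (hle j hj) hjne)

lemma pathOfCycle_mem (hS : S ∈ cycleSubsets m h) (hbig : ¬ ∀ x ∈ S, x ≤ m - h) :
    (pathOfCycle m h S).1 < h ∧ (pathOfCycle m h S).2 ∈ pathSubsets (m - 2 * h - 1) h := by
  obtain ⟨-, hbgt, hbm, hwin⟩ := sup_mem_window_of_mem_cycleSubsets hS hbig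
  have hsep := (mem_cycleSubsets.1 hS).2
  refine ⟨by simp only [pathOfCycle]; omega, mem_pathSubsets.2 ⟨?_, ?_⟩⟩
  · simp only [pathOfCycle, forall_mem_image]
    intro j hj
    have := hwin j hj
    omega
  · simp only [pathOfCycle, forall_mem_image]
    intro i hi j hj hij
    have := hwin i hi
    have := hwin j hj
    have := hsep i (mem_of_mem_erase hi) j (mem_of_mem_erase hj) (by omega)
    omega

lemma cycleOfPath_pathOfCycle (hS : S ∈ cycleSubsets m h) (hbig : ¬ ∀ x ∈ S, x ≤ m - h) :
    cycleOfPath m h (pathOfCycle m h S).1 (pathOfCycle m h S).2 = S := by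
  obtain ⟨hsup, hbgt, hbm, hwin⟩ := sup_mem_window_of_mem_cycleSubsets hS hbig
  rw [cycleOfPath, pathOfCycle, image_image]
  dsimp only
  rw [show m - (m - S.sup id) = S.sup id by omega]
  conv_rhs => rw [← insert_erase hsup, ← image_id (s := S.erase _)]
  congr 1
  refine image_congr fun j hj => ?_
  have := hwin j hj
  simp only [Function.comp, id]
  omega

lemma card_filter_cycleSubsets_not_forall_le (hm : h ≤ m) (r : ℤ) :
    #{S ∈ cycleSubsets m h | (¬ ∀ x ∈ S, x ≤ m - h) ∧ (S.card : ℤ) = r}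
      = h * pcountZ h ((m : ℤ) - 2 * h - 1) (r - 1) := by
  rw [pcountZ, show ((m : ℤ) - 2 * h - 1).toNat = m - 2 * h - 1 by omega,
    show h * #{T ∈ pathSubsets (m - 2 * h - 1) h | (T.card : ℤ) = r - 1}
      = #(range h ×ˢ {T ∈ pathSubsets (m - 2 * h - 1) h | (T.card : ℤ) = r - 1})
      by rw [card_product, card_range]]
  refine card_nbij' (fun S => pathOfCycle m h S) (fun p => cycleOfPath m h p.1 p.2) ?_ ?_ ?_ ?_
  · intro S hS
    simp only [mem_coe, mem_filter] at hS
    obtain ⟨hS, hbig, hcard⟩ := hS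
    obtain ⟨ht, hT⟩ := pathOfCycle_mem hS hbig
    have := card_cycleOfPath ht hT
    rw [cycleOfPath_pathOfCycle hS hbig] at this
    simp only [mem_coe, mem_product, mem_range, mem_filter]
    exact ⟨ht, hT, by omega⟩
  · rintro ⟨t, T⟩ hp
    simp only [mem_coe, mem_product, mem_range, mem_filter] at hp
    obtain ⟨ht, hT, hcard⟩ := hp
    have hmax := sup_cycleOfPath (m := m) ht hT
    simp only [mem_coe, mem_filter]
    refine ⟨cycleOfPath_mem_cycleSubsets hm ht hT, fun hle => ?_, ?_⟩
    · have := hle _ (mem_insert_self _ _)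
      omega
    · rw [card_cycleOfPath ht hT]
      omega
  · intro S hS
    simp only [mem_coe, mem_filter] at hS
    exact cycleOfPath_pathOfCycle hS.1 hS.2.1
  · rintro ⟨t, T⟩ hp
    simp only [mem_coe, mem_product, mem_range, mem_filter] at hp
    exact pathOfCycle_cycleOfPath hm hp.1 hp.2.1

lemma card_filter_cycleSubsets_card_eq (hm : h ≤ m) (r : ℤ) :
    #{S ∈ cycleSubsets m h | (S.card : ℤ) = r}
      = pcountZ h ((m : ℤ) - h) r + h * pcountZ h ((m : ℤ) - 2 * h - 1) (r - 1) := by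
  rw [← card_filter_cycleSubsets_not_forall_le hm, ← card_filter_add_card_filter_not
    (fun S => ∀ x ∈ S, x ≤ m - h), filter_filter, filter_filter, pcountZ,
    show ((m : ℤ) - h).toNat = m - h by omega, ← filter_cycleSubsets_forall_le, filter_filter]
  simp only [and_comm]

end

theorem stmt18 (n h k : ℕ) (hn : n > 2 * h + 1) (hk : 1 ≤ k) :
    pcountZ h ((n : ℤ) - 2 * h - 1) ((k : ℤ) - 1)
      + h * pcountZ h ((n : ℤ) - 3 * h - 2) ((k : ℤ) - 2)
      = cycleCount (n - h - 1) h (k - 1) := by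
  have key := card_filter_cycleSubsets_card_eq (m := n - h - 1) (h := h) (by omega) ((k : ℤ) - 1)
  rw [show ((n - h - 1 : ℕ) : ℤ) - h = n - 2 * h - 1 by omega,
    show ((n - h - 1 : ℕ) : ℤ) - 2 * h - 1 = n - 3 * h - 2 by omega,
    show (k : ℤ) - 1 - 1 = k - 2 by ring] at key
  rw [← key, cycleCount]
  congr 1
  exact filter_congr fun S _ => by omega
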